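/- arXiv:2311.00132 — 4 statements merged into one kernel-verified Lean document; each statement's English description precedes it below -/
import Mathlib

section
/- For L > 0, the number of solutions y > 0 of the equation y² sec²(y) = L² subject to tan(y) > 0 equals ⌈L/π⌉. -/
open Real

namespace Stmt0Aux

open Set

noncomputable def G (L : ℝ) : ℝ → ℝ := fun y => y - L * Real.sqrt (Real.cos y ^ 2)

lemma cos_two_shift (k : ℕ) (x : ℝ) :
    Real.cos (2 * x - k * (2 * π)) = Real.cos (2 * x) := by
  have h := Real.cos_add_int_mul_two_pi (2 * x) (-(k : ℤ))
  push_cast at h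
  rw [show 2 * x - (k : ℝ) * (2 * π) = 2 * x + -(k : ℝ) * (2 * π) from by ring]
  exact h

lemma cos_sq_eq (k : ℕ) (x : ℝ) :
    Real.cos x ^ 2 = 1 / 2 + Real.cos (2 * x - k * (2 * π)) / 2 := by
  rw [Real.cos_sq, cos_two_shift]

lemma cos_sq_antiOn (k : ℕ) {a b : ℝ} (ha : a ∈ Icc ((k : ℝ) * π) ((k : ℝ) * π + π / 2))
    (hb : b ∈ Icc ((k : ℝ) * π) ((k : ℝ) * π + π / 2)) (hab : a < b) :
    Real.cos b ^ 2 < Real.cos a ^ 2 := by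
  rw [cos_sq_eq k a, cos_sq_eq k b]
  have h1 : Real.cos (2 * b - k * (2 * π)) < Real.cos (2 * a - k * (2 * π)) :=
    Real.strictAntiOn_cos ⟨by linarith [ha.1], by linarith [ha.2]⟩
      ⟨by linarith [hb.1], by linarith [hb.2]⟩ (by linarith)
  linarith

lemma cos_sq_pos (k : ℕ) {y : ℝ} (hy : y ∈ Ioo ((k : ℝ) * π) ((k : ℝ) * π + π / 2)) :
    0 < Real.cos y ^ 2 := by
  rw [cos_sq_eq k y]
  have h1 : Real.cos π < Real.cos (2 * y - k * (2 * π)) :=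
    Real.strictAntiOn_cos ⟨by linarith [hy.1], by linarith [hy.2]⟩
      ⟨Real.pi_pos.le, le_refl _⟩ (by linarith [hy.2])
  rw [Real.cos_pi] at h1
  linarith

lemma G_strictMonoOn (L : ℝ) (hL : 0 < L) (k : ℕ) :
    StrictMonoOn (G L) (Icc ((k : ℝ) * π) ((k : ℝ) * π + π / 2)) := by
  intro a ha b hb hab
  have h1 : Real.cos b ^ 2 < Real.cos a ^ 2 := cos_sq_antiOn k ha hb hab
  have h2 : Real.sqrt (Real.cos b ^ 2) < Real.sqrt (Real.cos a ^ 2) :=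
    Real.sqrt_lt_sqrt (sq_nonneg _) h1
  unfold G
  nlinarith

lemma tan_eq_shift (k : ℕ) (y : ℝ) : Real.tan y = Real.tan (y - k * π) := by
  have h := (Real.tan_periodic.nat_mul k) (y - k * π)
  simpa using h

lemma tan_pos_of_mem (k : ℕ) {y : ℝ} (hy : y ∈ Ioo ((k : ℝ) * π) ((k : ℝ) * π + π / 2)) :
    0 < Real.tan y := by
  rw [tan_eq_shift k y]
  exact Real.tan_pos_of_pos_of_lt_pi_div_two (by linarith [hy.1]) (by linarith [hy.2])

lemma exists_root (L : ℝ) (hL : 0 < L) (k : ℕ) (hk : (k : ℝ) * π < L) :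
    ∃ y ∈ Ioo ((k : ℝ) * π) ((k : ℝ) * π + π / 2), G L y = 0 := by
  have hpi := Real.pi_pos
  have hcont : ContinuousOn (G L) (Icc ((k : ℝ) * π) ((k : ℝ) * π + π / 2)) := by
    apply Continuous.continuousOn
    unfold G
    continuity
  have hGa : G L ((k : ℝ) * π) = (k : ℝ) * π - L := by
    unfold G
    have : Real.cos ((k : ℝ) * π) ^ 2 = 1 := by
      rw [cos_sq_eq k ((k : ℝ) * π)]
      have : 2 * ((k : ℝ) * π) - k * (2 * π) = 0 := by ring
      rw [this, Real.cos_zero]; norm_num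
    rw [this, Real.sqrt_one, mul_one]
  have hGb : G L ((k : ℝ) * π + π / 2) = (k : ℝ) * π + π / 2 := by
    unfold G
    have : Real.cos ((k : ℝ) * π + π / 2) ^ 2 = 0 := by
      rw [cos_sq_eq k ((k : ℝ) * π + π / 2)]
      have : 2 * ((k : ℝ) * π + π / 2) - k * (2 * π) = π := by ring
      rw [this, Real.cos_pi]; norm_num
    rw [this, Real.sqrt_zero, mul_zero, sub_zero]
  have hle : (k : ℝ) * π ≤ (k : ℝ) * π + π / 2 := by linarith
  have h0 : (0 : ℝ) ∈ Ioo (G L ((k : ℝ) * π)) (G L ((k : ℝ) * π + π / 2)) := by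
    rw [hGa, hGb]
    constructor
    · linarith
    · have : (0 : ℝ) ≤ (k : ℝ) * π := by positivity
      linarith
  obtain ⟨y, hy, hGy⟩ := intermediate_value_Ioo hle hcont h0
  exact ⟨y, hy, hGy⟩

lemma mem_interval_of_sol {y : ℝ} (hy : 0 < y) (hc : Real.cos y ≠ 0) (ht : 0 < Real.tan y) :
    ∃ k : ℕ, y ∈ Ioo ((k : ℝ) * π) ((k : ℝ) * π + π / 2) := by
  have hpi := Real.pi_pos
  set k : ℕ := ⌊y / π⌋.toNat with hkdef
  have hfl : (0 : ℤ) ≤ ⌊y / π⌋ := Int.floor_nonneg.2 (by positivity)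
  have hkcast : ((k : ℤ) : ℝ) = (⌊y / π⌋ : ℝ) := by
    rw [hkdef]; exact_mod_cast congrArg Int.cast (Int.toNat_of_nonneg hfl)
  have hk1 : (k : ℝ) * π ≤ y := by
    have := Int.floor_le (y / π)
    have h2 : (k : ℝ) ≤ y / π := by rw [show ((k : ℝ) = ((k : ℤ) : ℝ)) by push_cast; ring, hkcast]; exact this
    calc (k : ℝ) * π ≤ (y / π) * π := by nlinarith
    _ = y := by field_simp
  have hk2 : y < (k : ℝ) * π + π := by
    have := Int.lt_floor_add_one (y / π)
    have h2 : y / π < (k : ℝ) + 1 := by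
      rw [show ((k : ℝ) = ((k : ℤ) : ℝ)) by push_cast; ring, hkcast]; exact this
    nlinarith [div_lt_iff₀ hpi |>.1 h2]
  refine ⟨k, ?_, ?_⟩
  · -- y ≠ kπ since tan y > 0, and strict from that
    rcases lt_or_eq_of_le hk1 with h | h
    · exact h
    · exfalso
      rw [tan_eq_shift k y, ← h, sub_self, Real.tan_zero] at ht
      exact lt_irrefl 0 ht
  · by_contra hcon
    push_neg at hcon
    rcases lt_or_eq_of_le hcon with h | h
    · -- t := y - kπ ∈ (π/2, π): tan < 0
      have ht' : Real.tan (y - k * π) < 0 := by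
        rw [show y - (k : ℝ) * π = (y - k * π - π) + π by ring, Real.tan_add_pi]
        apply Real.tan_neg_of_neg_of_pi_div_two_lt <;> [linarith; linarith]
      rw [tan_eq_shift k y] at ht
      linarith
    · -- y = kπ + π/2 : cos y = 0
      exfalso
      apply hc
      have : Real.cos y ^ 2 = 0 := by
        rw [cos_sq_eq k y, ← h]
        have : 2 * ((k : ℝ) * π + π / 2) - k * (2 * π) = π := by ring
        rw [this, Real.cos_pi]; norm_num
      exact pow_eq_zero_iff (n := 2) (by norm_num) |>.1 this

lemma G_zero_iff (L : ℝ) (hL : 0 < L) {y : ℝ} (hy : 0 < y) (hc : Real.cos y ≠ 0) :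
    (y ^ 2 * (1 / Real.cos y) ^ 2 = L ^ 2) ↔ G L y = 0 := by
  have hsq : Real.sqrt (Real.cos y ^ 2) = |Real.cos y| := Real.sqrt_sq_eq_abs _
  constructor
  · intro h
    have h2 : y ^ 2 = L ^ 2 * Real.cos y ^ 2 := by
      field_simp at h
      linarith
    unfold G
    rw [hsq]
    have h4 : y ^ 2 = (L * |Real.cos y|) ^ 2 := by rw [mul_pow, sq_abs]; linarith
    have h3 : y = L * |Real.cos y| := by
      have h5 := congrArg Real.sqrt h4
      rwa [Real.sqrt_sq hy.le, Real.sqrt_sq (by positivity)] at h5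
    linarith
  · intro h
    unfold G at h
    rw [hsq] at h
    have h3 : y = L * |Real.cos y| := by linarith
    have h2 : y ^ 2 = L ^ 2 * Real.cos y ^ 2 := by
      have h5 := congrArg (fun t : ℝ => t ^ 2) h3
      simp only [mul_pow, sq_abs] at h5
      linarith
    field_simp
    linarith

end Stmt0Aux

/-- For `L > 0`, the number of solutions `y > 0` of `y² sec²(y) = L²` with `tan y > 0`
(considered only where `cos y ≠ 0`) equals `⌈L/π⌉`. -/
theorem stmt_0 (L : ℝ) (hL : 0 < L) :
    ({y : ℝ | 0 < y ∧ Real.cos y ≠ 0 ∧ y ^ 2 * (1 / Real.cos y) ^ 2 = L ^ 2 ∧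
        0 < Real.tan y}).ncard = ⌈L / Real.pi⌉₊ := by
  classical
  open Stmt0Aux Set in
  have hpi := Real.pi_pos
  set n := ⌈L / Real.pi⌉₊ with hn
  have hlt_iff : ∀ k : ℕ, k < n ↔ (k : ℝ) * π < L := by
    intro k
    rw [hn, Nat.lt_ceil, lt_div_iff₀ hpi]
  set u : ℕ → ℝ := fun k =>
    if h : (k : ℝ) * π < L then (Stmt0Aux.exists_root L hL k h).choose else 0 with hu
  have hu_spec : ∀ k : ℕ, (k : ℝ) * π < L →
      u k ∈ Ioo ((k : ℝ) * π) ((k : ℝ) * π + π / 2) ∧ Stmt0Aux.G L (u k) = 0 := by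
    intro k hk
    have := (Stmt0Aux.exists_root L hL k hk).choose_spec
    rw [hu]; simp only [dif_pos hk]; exact this
  have hmem : ∀ k : ℕ, (k : ℝ) * π < L → u k ∈ {y : ℝ | 0 < y ∧ Real.cos y ≠ 0 ∧
      y ^ 2 * (1 / Real.cos y) ^ 2 = L ^ 2 ∧ 0 < Real.tan y} := by
    intro k hk
    obtain ⟨hio, hG⟩ := hu_spec k hk
    have hpos : 0 < u k := lt_of_le_of_lt (by positivity) hio.1
    have hcos : Real.cos (u k) ≠ 0 := by
      have := Stmt0Aux.cos_sq_pos k hio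
      intro h; rw [h] at this; norm_num at this
    refine ⟨hpos, hcos, ?_, Stmt0Aux.tan_pos_of_mem k hio⟩
    exact (Stmt0Aux.G_zero_iff L hL hpos hcos).2 hG
  have himg : {y : ℝ | 0 < y ∧ Real.cos y ≠ 0 ∧ y ^ 2 * (1 / Real.cos y) ^ 2 = L ^ 2 ∧
      0 < Real.tan y} = u '' (Iio n) := by
    ext y
    simp only [mem_setOf_eq, mem_image, mem_Iio]
    constructor
    · rintro ⟨hy, hc, heq, ht⟩
      obtain ⟨k, hio⟩ := Stmt0Aux.mem_interval_of_sol hy hc ht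
      have hG : Stmt0Aux.G L y = 0 := (Stmt0Aux.G_zero_iff L hL hy hc).1 heq
      have hyL : y ≤ L := by
        have h1 : y = L * Real.sqrt (Real.cos y ^ 2) := by
          unfold Stmt0Aux.G at hG; linarith
        have h2 : Real.sqrt (Real.cos y ^ 2) ≤ 1 := by
          rw [Real.sqrt_sq_eq_abs]
          exact abs_cos_le_one y
        nlinarith
      have hk : (k : ℝ) * π < L := lt_of_lt_of_le hio.1 hyL
      refine ⟨k, (hlt_iff k).2 hk, ?_⟩
      obtain ⟨hio', hG'⟩ := hu_spec k hk
      have hIcc : Ioo ((k : ℝ) * π) ((k : ℝ) * π + π / 2) ⊆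
          Icc ((k : ℝ) * π) ((k : ℝ) * π + π / 2) := Ioo_subset_Icc_self
      exact (Stmt0Aux.G_strictMonoOn L hL k).injOn (hIcc hio') (hIcc hio) (by rw [hG, hG'])
    · rintro ⟨k, hk, rfl⟩
      exact hmem k ((hlt_iff k).1 hk)
  have hinj : Set.InjOn u (Iio n) := by
    intro a ha b hb hab
    by_contra hne
    wlog h : a < b generalizing a b
    · exact this hb ha hab.symm (Ne.symm hne) (lt_of_le_of_ne (not_lt.1 h) (Ne.symm hne))
    have hka : (a : ℝ) * π < L := (hlt_iff a).1 ha
    have hkb : (b : ℝ) * π < L := (hlt_iff b).1 hb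
    obtain ⟨hioa, _⟩ := hu_spec a hka
    obtain ⟨hiob, _⟩ := hu_spec b hkb
    have hab' : (a : ℝ) + 1 ≤ (b : ℝ) := by exact_mod_cast h
    have : u a < u b := by
      calc u a < (a : ℝ) * π + π / 2 := hioa.2
      _ ≤ (b : ℝ) * π := by nlinarith
      _ < u b := hiob.1
    rw [hab] at this
    exact lt_irrefl _ this
  rw [himg, Set.ncard_image_of_injOn hinj, ← Finset.coe_range, Set.ncard_coe_finset,
    Finset.card_range]
end

section
/- For L > 0, the number of solutions y > 0 of the equation (y/sin(y))² = L² subject to cot(y) < 0 equals ⌈L/π − 1/2⌉. -/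
open Real Set

/-!
Writing `y = x + kπ` with `x ∈ (0, π)`, the conditions become `π/2 < x` and `x + kπ = L sin x`,
since `cot` and `sin²` are `π`-periodic. On `[π/2, π]` the map `x ↦ x - L sin x` is strictly
increasing from `π/2 - L` to `π`, so branch `k` carries exactly one solution when
`kπ + π/2 < L` and none otherwise; these are the `k < ⌈L/π - 1/2⌉`.
-/

namespace SlabWaveguide

def antisymmetricModes (L : ℝ) : Set ℝ :=
  {y | 0 < y ∧ sin y ≠ 0 ∧ (y / sin y) ^ 2 = L ^ 2 ∧ cos y / sin y < 0}

lemma strictMonoOn_sub_mul_sin {L : ℝ} (hL : 0 ≤ L) :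
    StrictMonoOn (fun x => x - L * sin x) (Icc (π / 2) (π + π / 2)) := by
  refine strictMonoOn_of_deriv_pos (convex_Icc _ _) (by fun_prop) fun x hx => ?_
  rw [interior_Icc] at hx
  have hcos : cos x < 0 := cos_neg_of_pi_div_two_lt_of_lt hx.1 hx.2
  have hderiv : HasDerivAt (fun x => x - L * sin x) (1 - L * cos x) x :=
    (hasDerivAt_id' x).sub ((hasDerivAt_sin x).const_mul L)
  rw [hderiv.deriv]
  nlinarith

lemma exists_mem_Ioo_add_eq_mul_sin {c L : ℝ} (hc : 0 < c + π) (hL : c + π / 2 < L) :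
    ∃ x ∈ Ioo (π / 2) π, x + c = L * sin x := by
  have hcont : ContinuousOn (fun x => x + c - L * sin x) (Icc (π / 2) π) := by fun_prop
  obtain ⟨x, hx, hx0⟩ := intermediate_value_Ioo (by linarith [pi_pos]) hcont
    (show (0 : ℝ) ∈ Ioo _ _ from ⟨by simp only [sin_pi_div_two]; linarith,
      by simp only [sin_pi]; linarith⟩)
  exact ⟨x, hx, sub_eq_zero.1 hx0⟩

lemma cos_div_sin_add_nat_mul_pi (x : ℝ) (k : ℕ) :
    cos (x + k * π) / sin (x + k * π) = cos x / sin x := by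
  rw [sin_add_nat_mul_pi, cos_add_nat_mul_pi, mul_div_mul_left _ _ (by simp)]

lemma sin_add_nat_mul_pi_sq (x : ℝ) (k : ℕ) : sin (x + k * π) ^ 2 = sin x ^ 2 := by
  rw [sin_add_nat_mul_pi, mul_pow, ← pow_mul, pow_mul', neg_one_sq, one_pow, one_mul]

lemma nat_floor_div_pi {k : ℕ} {x : ℝ} (hx : x ∈ Ico 0 π) : ⌊(x + k * π) / π⌋₊ = k := by
  have hpi := pi_pos
  rw [Nat.floor_eq_iff (by have := hx.1; positivity), add_div, mul_div_cancel_right₀ _ hpi.ne']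
  constructor
  · linarith [div_nonneg hx.1 hpi.le]
  · linarith [(div_lt_one hpi).2 hx.2]

lemma sub_nat_floor_div_pi_mul_pi_mem_Ico {y : ℝ} (hy : 0 ≤ y) : y - ⌊y / π⌋₊ * π ∈ Ico 0 π := by
  have hpi := pi_pos
  have h1 := Nat.floor_le (div_nonneg hy hpi.le)
  have h2 := Nat.lt_floor_add_one (y / π)
  rw [le_div_iff₀ hpi] at h1
  rw [div_lt_iff₀ hpi] at h2
  constructor <;> linarith

lemma add_nat_mul_pi_mem_antisymmetricModes_iff {L x : ℝ} (hL : 0 < L) (k : ℕ)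
    (hx : x ∈ Ioo 0 π) :
    x + k * π ∈ antisymmetricModes L ↔ π / 2 < x ∧ x + k * π = L * sin x := by
  have hsin : 0 < sin x := sin_pos_of_pos_of_lt_pi hx.1 hx.2
  have hpos : 0 < x + k * π := by have := hx.1; positivity
  have hsin_ne : sin (x + k * π) ≠ 0 := by
    rw [sin_add_nat_mul_pi]
    exact mul_ne_zero (by simp) hsin.ne'
  have hcot : cos x / sin x < 0 ↔ π / 2 < x := by
    rw [div_lt_iff₀ hsin, zero_mul]
    refine ⟨fun h => ?_, fun h => cos_neg_of_pi_div_two_lt_of_lt h (by linarith [hx.2, pi_pos])⟩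
    by_contra! h'
    exact h.not_ge (cos_nonneg_of_mem_Icc ⟨by linarith [hx.1, pi_pos], h'⟩)
  have hsq : (x + k * π) ^ 2 / sin x ^ 2 = L ^ 2 ↔ x + k * π = L * sin x := by
    rw [div_eq_iff (by positivity), ← mul_pow]
    exact pow_left_inj₀ hpos.le (by positivity) two_ne_zero
  rw [antisymmetricModes, mem_ofPred_eq, cos_div_sin_add_nat_mul_pi, div_pow,
    sin_add_nat_mul_pi_sq, hcot, hsq]
  tauto

lemma exists_nat_mem_Ioo_eq_add_mul_pi {y : ℝ} (hy : 0 ≤ y) (hsin : sin y ≠ 0) :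
    ∃ k : ℕ, ∃ x ∈ Ioo 0 π, y = x + k * π := by
  obtain ⟨hx0, hxπ⟩ := sub_nat_floor_div_pi_mul_pi_mem_Ico hy
  refine ⟨⌊y / π⌋₊, _, ⟨hx0.lt_of_ne fun h => hsin ?_, hxπ⟩, by ring⟩
  rw [show y = ⌊y / π⌋₊ * π by linarith, sin_nat_mul_pi]

lemma ncard_antisymmetricModes {L : ℝ} (hL : 0 < L) :
    (antisymmetricModes L).ncard = {k : ℕ | k * π + π / 2 < L}.ncard := by
  refine ncard_congr (fun y _ => ⌊y / π⌋₊) (fun y hy => ?_) (fun y y' hy hy' hkk' => ?_)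
    (fun k hk => ?_)
  · obtain ⟨k, x, hx, rfl⟩ := exists_nat_mem_Ioo_eq_add_mul_pi hy.1.le hy.2.1
    obtain ⟨hx2, hxL⟩ := (add_nat_mul_pi_mem_antisymmetricModes_iff hL k hx).1 hy
    rw [mem_ofPred_eq, nat_floor_div_pi (Ioo_subset_Ico_self hx)]
    linarith [mul_le_of_le_one_right hL.le (sin_le_one x)]
  · obtain ⟨k, x, hx, rfl⟩ := exists_nat_mem_Ioo_eq_add_mul_pi hy.1.le hy.2.1
    obtain ⟨k', x', hx', rfl⟩ := exists_nat_mem_Ioo_eq_add_mul_pi hy'.1.le hy'.2.1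
    obtain rfl : k = k' := by
      rwa [nat_floor_div_pi (Ioo_subset_Ico_self hx),
        nat_floor_div_pi (Ioo_subset_Ico_self hx')] at hkk'
    obtain ⟨hx2, hxL⟩ := (add_nat_mul_pi_mem_antisymmetricModes_iff hL k hx).1 hy
    obtain ⟨hx2', hxL'⟩ := (add_nat_mul_pi_mem_antisymmetricModes_iff hL k hx').1 hy'
    have hxx' : x = x' := (strictMonoOn_sub_mul_sin hL.le).injOn
      ⟨hx2.le, by linarith [hx.2]⟩ ⟨hx2'.le, by linarith [hx'.2]⟩ (by linarith)
    rw [hxx']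
  · obtain ⟨x, hx, hxL⟩ := exists_mem_Ioo_add_eq_mul_sin (by positivity) hk
    have hx' : x ∈ Ioo 0 π := ⟨by linarith [hx.1, pi_pos], hx.2⟩
    exact ⟨x + k * π, (add_nat_mul_pi_mem_antisymmetricModes_iff hL k hx').2 ⟨hx.1, hxL⟩,
      nat_floor_div_pi (Ioo_subset_Ico_self hx')⟩

lemma ncard_setOf_nat_mul_pi_add_pi_div_two_lt {L : ℝ} (hL : -(π / 2) < L) :
    ({k : ℕ | k * π + π / 2 < L}.ncard : ℤ) = ⌈L / π - 1 / 2⌉ := by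
  have hpi := pi_pos
  have hset : {k : ℕ | k * π + π / 2 < L} = Iio ⌈L / π - 1 / 2⌉₊ := by
    ext k
    rw [mem_ofPred_eq, mem_Iio, Nat.lt_ceil, lt_sub_iff_add_lt, lt_div_iff₀ hpi]
    constructor <;> intro h <;> linarith
  rw [hset, ncard_Iio_nat]
  refine Int.natCast_ceil_eq_ceil_of_neg_one_lt ?_
  rw [lt_sub_iff_add_lt, lt_div_iff₀ hpi]
  linarith

end SlabWaveguide

open SlabWaveguide in
/-- For `L > 0`, the number of solutions `y > 0` of `(y / sin y)² = L²` with `cot y < 0`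
(considered only where `sin y ≠ 0`) equals `⌈L/π − 1/2⌉`. -/
theorem stmt_1 (L : ℝ) (hL : 0 < L) :
    (({y : ℝ | 0 < y ∧ Real.sin y ≠ 0 ∧ (y / Real.sin y) ^ 2 = L ^ 2 ∧
        Real.cos y / Real.sin y < 0}).ncard : ℤ) = ⌈L / Real.pi - 1 / 2⌉ := by
  rw [← ncard_setOf_nat_mul_pi_add_pi_div_two_lt (by linarith [pi_pos])]
  exact congrArg _ (ncard_antisymmetricModes hL)
end

section
/- Suppose sin(kn̄) = 0 with kn̄ > 0. Then as h → 0⁺, sin(h√(k²τ² + d(h)²)) = ±h²·k(τ² − n_cl²)/(2n̄) + O(h⁴(1+τ⁴)) and cos(h√(k²τ² + d(h)²)) = ±1 + O(h⁴(1+τ⁴)), where the sign is cos(kn̄) ∈ {+1, −1}, uniformly in τ ≥ 0. -/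
/-! With `ε = h²(τ² − n_cl²)` the phase is `h√(k²τ² + d(h)²) = k√(n̄² + ε) = kn̄ + δ`, where
`δ = k(√(n̄² + ε) − n̄)`. The identity `(√(n̄² + ε) − n̄)(√(n̄² + ε) + n̄) = ε` gives `|δ| ≤ k|ε|/n̄`
and `δ = kε/(2n̄) + O(ε²)`. As `sin(kn̄) = 0`, the addition formulas reduce `sin` and `cos` of
`kn̄ + δ` to `cos(kn̄) sin δ` and `cos(kn̄) cos δ`, and `sin δ = δ + O(δ²)`, `cos δ = 1 + O(δ²)`.
Finally `ε² ≤ (1 + n_cl⁴) h⁴ (1 + τ⁴)`. -/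

open Real

lemma abs_sin_sub_self_le_sq (x : ℝ) : |sin x - x| ≤ x ^ 2 := by
  rw [abs_sub_comm]
  rcases le_or_gt |x| 6 with hx | hx
  · calc |x - sin x| ≤ |x| ^ 3 / 6 := abs_sub_sin_le x
      _ ≤ x ^ 2 := by nlinarith [sq_abs x, abs_nonneg x, sq_nonneg x]
  · calc |x - sin x| ≤ |x| + |sin x| := abs_sub _ _
      _ ≤ x ^ 2 := by nlinarith [sq_abs x, abs_sin_le_abs (x := x)]

lemma abs_cos_sub_one_le (x : ℝ) : |cos x - 1| ≤ x ^ 2 / 2 := by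
  rw [abs_le]
  constructor <;> linarith [one_sub_sq_div_two_le_cos (x := x), cos_le_one x, sq_nonneg x]

section SqrtExpansion

variable {a ε : ℝ}

lemma sqrt_sq_add_sub_mul_add (hε : 0 ≤ a ^ 2 + ε) :
    (√(a ^ 2 + ε) - a) * (√(a ^ 2 + ε) - a + 2 * a) = ε := by
  linear_combination sq_sqrt hε

lemma abs_sqrt_sq_add_sub_le (ha : 0 < a) (hε : 0 ≤ a ^ 2 + ε) :
    |√(a ^ 2 + ε) - a| ≤ |ε| / a := by
  have hroot : a ≤ √(a ^ 2 + ε) - a + 2 * a := by linarith [sqrt_nonneg (a ^ 2 + ε)]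
  rw [le_div_iff₀ ha]
  calc |√(a ^ 2 + ε) - a| * a ≤ |√(a ^ 2 + ε) - a| * (√(a ^ 2 + ε) - a + 2 * a) := by gcongr
    _ = |ε| := by
        rw [← abs_of_nonneg (ha.le.trans hroot), ← abs_mul, sqrt_sq_add_sub_mul_add hε]

lemma sq_sqrt_sq_add_sub_le (ha : 0 < a) (hε : 0 ≤ a ^ 2 + ε) :
    (√(a ^ 2 + ε) - a) ^ 2 ≤ ε ^ 2 / a ^ 2 := by
  rw [← sq_abs, ← sq_abs ε, ← div_pow]
  exact pow_le_pow_left₀ (abs_nonneg _) (abs_sqrt_sq_add_sub_le ha hε) 2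

lemma abs_sqrt_sq_add_sub_sub_le (ha : 0 < a) (hε : 0 ≤ a ^ 2 + ε) :
    |√(a ^ 2 + ε) - a - ε / (2 * a)| ≤ ε ^ 2 / (2 * a ^ 3) := by
  set δ := √(a ^ 2 + ε) - a
  have hexact : δ - ε / (2 * a) = -(δ ^ 2 / (2 * a)) := by
    rw [← sqrt_sq_add_sub_mul_add hε]
    field_simp
    ring
  rw [hexact, abs_neg, abs_of_nonneg (by positivity)]
  calc δ ^ 2 / (2 * a) ≤ ε ^ 2 / a ^ 2 / (2 * a) := by gcongr; exact sq_sqrt_sq_add_sub_le ha hε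
    _ = ε ^ 2 / (2 * a ^ 3) := by field_simp

end SqrtExpansion

section ZeroOfSin

variable {c : ℝ}

lemma sin_add_of_sin_eq_zero (hc : sin c = 0) (x : ℝ) : sin (c + x) = cos c * sin x := by
  rw [sin_add, hc, zero_mul, zero_add]

lemma cos_add_of_sin_eq_zero (hc : sin c = 0) (x : ℝ) : cos (c + x) = cos c * cos x := by
  rw [cos_add, hc, zero_mul, sub_zero]

lemma abs_cos_of_sin_eq_zero (hc : sin c = 0) : |cos c| = 1 := by
  rcases sin_eq_zero_iff_cos_eq.mp hc with h | h <;> simp [h]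

end ZeroOfSin

section PhaseExpansion

variable {k a ε : ℝ}

lemma abs_sin_mul_sqrt_sq_add_sub_le (hk : 0 ≤ k) (ha : 0 < a) (hε : 0 ≤ a ^ 2 + ε)
    (hsin : sin (k * a) = 0) :
    |sin (k * √(a ^ 2 + ε)) - cos (k * a) * (k * ε / (2 * a))| ≤
      (k ^ 2 / a ^ 2 + k / (2 * a ^ 3)) * ε ^ 2 := by
  set δ := k * (√(a ^ 2 + ε) - a)
  have hδ_sq : δ ^ 2 ≤ k ^ 2 * (ε ^ 2 / a ^ 2) := by
    rw [mul_pow]; gcongr; exact sq_sqrt_sq_add_sub_le ha hε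
  have hδ_lin : |δ - k * ε / (2 * a)| ≤ k * (ε ^ 2 / (2 * a ^ 3)) := by
    rw [show δ - k * ε / (2 * a) = k * (√(a ^ 2 + ε) - a - ε / (2 * a)) by ring, abs_mul,
      abs_of_nonneg hk]
    gcongr
    exact abs_sqrt_sq_add_sub_sub_le ha hε
  rw [show k * √(a ^ 2 + ε) = k * a + δ by ring, sin_add_of_sin_eq_zero hsin, ← mul_sub, abs_mul,
    abs_cos_of_sin_eq_zero hsin, one_mul]
  calc |sin δ - k * ε / (2 * a)| ≤ |sin δ - δ| + |δ - k * ε / (2 * a)| := abs_sub_le _ _ _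
    _ ≤ δ ^ 2 + k * (ε ^ 2 / (2 * a ^ 3)) := add_le_add (abs_sin_sub_self_le_sq δ) hδ_lin
    _ ≤ k ^ 2 * (ε ^ 2 / a ^ 2) + k * (ε ^ 2 / (2 * a ^ 3)) := by gcongr
    _ = (k ^ 2 / a ^ 2 + k / (2 * a ^ 3)) * ε ^ 2 := by ring

lemma abs_cos_mul_sqrt_sq_add_sub_le (ha : 0 < a) (hε : 0 ≤ a ^ 2 + ε)
    (hsin : sin (k * a) = 0) :
    |cos (k * √(a ^ 2 + ε)) - cos (k * a)| ≤ k ^ 2 / (2 * a ^ 2) * ε ^ 2 := by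
  set δ := k * (√(a ^ 2 + ε) - a)
  rw [show k * √(a ^ 2 + ε) = k * a + δ by ring, cos_add_of_sin_eq_zero hsin,
    ← mul_sub_one, abs_mul, abs_cos_of_sin_eq_zero hsin, one_mul]
  calc |cos δ - 1| ≤ δ ^ 2 / 2 := abs_cos_sub_one_le δ
    _ ≤ k ^ 2 * (ε ^ 2 / a ^ 2) / 2 := by
        rw [mul_pow]; gcongr; exact sq_sqrt_sq_add_sub_le ha hε
    _ = k ^ 2 / (2 * a ^ 2) * ε ^ 2 := by ring

end PhaseExpansion

lemma mul_sqrt_eq_mul_sqrt_sq_add {k h : ℝ} (hk : 0 ≤ k) (hh : 0 < h) (n m τ : ℝ) :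
    h * √(k ^ 2 * τ ^ 2 + k ^ 2 * ((n / h) ^ 2 - m ^ 2)) =
      k * √(n ^ 2 + h ^ 2 * (τ ^ 2 - m ^ 2)) := by
  have hfactor : k ^ 2 * τ ^ 2 + k ^ 2 * ((n / h) ^ 2 - m ^ 2) =
      (k / h) ^ 2 * (n ^ 2 + h ^ 2 * (τ ^ 2 - m ^ 2)) := by
    field_simp
    ring
  rw [hfactor, sqrt_mul (sq_nonneg _), sqrt_sq (div_nonneg hk hh.le)]
  field_simp

lemma sq_mul_sq_sub_sq_le (h τ m : ℝ) :
    (h ^ 2 * (τ ^ 2 - m ^ 2)) ^ 2 ≤ (1 + m ^ 4) * (h ^ 4 * (1 + τ ^ 4)) := by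
  have : (τ ^ 2 - m ^ 2) ^ 2 ≤ (1 + m ^ 4) * (1 + τ ^ 4) := by
    nlinarith [mul_nonneg (sq_nonneg τ) (sq_nonneg m), sq_nonneg (τ ^ 2 * m ^ 2)]
  calc (h ^ 2 * (τ ^ 2 - m ^ 2)) ^ 2 = h ^ 4 * (τ ^ 2 - m ^ 2) ^ 2 := by ring
    _ ≤ h ^ 4 * ((1 + m ^ 4) * (1 + τ ^ 4)) := by gcongr
    _ = (1 + m ^ 4) * (h ^ 4 * (1 + τ ^ 4)) := by ring

/-- If `sin(k n̄) = 0` with `k n̄ > 0`, then as `h → 0⁺`, uniformly in `τ ≥ 0`,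
`sin(h√(k²τ² + d(h)²)) = cos(kn̄)·h²·k(τ² − n_cl²)/(2n̄) + O(h⁴(1+τ⁴))` and
`cos(h√(k²τ² + d(h)²)) = cos(kn̄) + O(h⁴(1+τ⁴))`, where `cos(kn̄) = ±1` and
`d(h)² = k²((n̄/h)² − n_cl²)`. -/
theorem stmt_9 (k nbar ncl : ℝ) (hk : 0 < k) (hn : 0 < nbar) (hncl : 0 < ncl)
    (hsin : Real.sin (k * nbar) = 0) :
    (Real.cos (k * nbar) = 1 ∨ Real.cos (k * nbar) = -1) ∧
    ∃ K > (0 : ℝ), ∃ h₀ > (0 : ℝ), ∀ h : ℝ, 0 < h → h < h₀ → ∀ τ : ℝ, 0 ≤ τ →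
      |Real.sin (h * Real.sqrt (k ^ 2 * τ ^ 2 + k ^ 2 * ((nbar / h) ^ 2 - ncl ^ 2))) -
          Real.cos (k * nbar) * (h ^ 2 * k * (τ ^ 2 - ncl ^ 2) / (2 * nbar))| ≤
        K * h ^ 4 * (1 + τ ^ 4) ∧
      |Real.cos (h * Real.sqrt (k ^ 2 * τ ^ 2 + k ^ 2 * ((nbar / h) ^ 2 - ncl ^ 2))) -
          Real.cos (k * nbar)| ≤ K * h ^ 4 * (1 + τ ^ 4) := by
  set C := k ^ 2 / nbar ^ 2 + k / (2 * nbar ^ 3)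
  refine ⟨sin_eq_zero_iff_cos_eq.mp hsin, C * (1 + ncl ^ 4), by positivity, nbar / ncl, by positivity,
    fun h hh hh₀ τ _ => ?_⟩
  set ε := h ^ 2 * (τ ^ 2 - ncl ^ 2)
  have hε : 0 ≤ nbar ^ 2 + ε := by
    have : h * ncl < nbar := (lt_div_iff₀ hncl).mp hh₀
    nlinarith [mul_pos hh hncl, sq_nonneg (h * τ)]
  have hε_sq : ε ^ 2 ≤ (1 + ncl ^ 4) * (h ^ 4 * (1 + τ ^ 4)) := sq_mul_sq_sub_sq_le h τ ncl
  rw [mul_sqrt_eq_mul_sqrt_sq_add hk.le hh,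
    show h ^ 2 * k * (τ ^ 2 - ncl ^ 2) / (2 * nbar) = k * ε / (2 * nbar) by ring]
  have hcos_const : k ^ 2 / (2 * nbar ^ 2) ≤ C := by
    have : k ^ 2 / (2 * nbar ^ 2) ≤ k ^ 2 / nbar ^ 2 := by gcongr; linarith [sq_nonneg nbar]
    linarith [div_pos hk (by positivity : (0 : ℝ) < 2 * nbar ^ 3)]
  constructor
  · calc _ ≤ C * ε ^ 2 := abs_sin_mul_sqrt_sq_add_sub_le hk.le hn hε hsin
      _ ≤ C * ((1 + ncl ^ 4) * (h ^ 4 * (1 + τ ^ 4))) := by gcongr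
      _ = _ := by ring
  · calc _ ≤ k ^ 2 / (2 * nbar ^ 2) * ε ^ 2 := abs_cos_mul_sqrt_sq_add_sub_le hn hε hsin
      _ ≤ C * ((1 + ncl ^ 4) * (h ^ 4 * (1 + τ ^ 4))) := by gcongr
      _ = _ := by ring
end

section
/- Let x₁, x₂ < 0 and z₁, z₂ ∈ ℝ, and let W(z) = H₀⁽¹⁾(κ√(x₁² + (z−z₁)²)) − H₀⁽¹⁾(κ√(x₂² + (z−z₂)²)) for κ > 0. If W(z) = 0 for all z ∈ [0,1], then W(z) = 0 for all z ∈ ℝ. -/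
open Complex

private lemma aux_mem_slitPlane (x c : ℝ) (hx : x < 0) (w : ℂ) (hw : |w.im| < -x) :
    (x : ℂ) ^ 2 + (w - (c : ℂ)) ^ 2 ∈ Complex.slitPlane := by
  set a : ℝ := w.re - c with ha
  have hre : ((x : ℂ) ^ 2 + (w - (c : ℂ)) ^ 2).re = x ^ 2 + (a ^ 2 - w.im ^ 2) := by
    simp [Complex.add_re, Complex.sq_norm, pow_two, Complex.mul_re, Complex.sub_re,
      Complex.sub_im, Complex.ofReal_re, Complex.ofReal_im, ha]
    try ring
  have him : ((x : ℂ) ^ 2 + (w - (c : ℂ)) ^ 2).im = 2 * a * w.im := by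
    simp [pow_two, Complex.add_im, Complex.mul_im, Complex.sub_re, Complex.sub_im,
      Complex.ofReal_re, Complex.ofReal_im, ha]
    try ring
  rw [Complex.mem_slitPlane_iff]
  by_cases h : 2 * a * w.im = 0
  · left
    rw [hre]
    have hb2 : w.im ^ 2 < x ^ 2 := by
      have := abs_lt.mp hw
      nlinarith [abs_nonneg w.im, _root_.sq_abs w.im]
    rcases mul_eq_zero.mp h with h' | h'
    · rcases mul_eq_zero.mp h' with h'' | h''
      · norm_num at h''
      · nlinarith
    · nlinarith [sq_nonneg a, sq_nonneg w.im, h']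
  · right; rw [him]; exact h

/-- complex square root via `exp (log v / 2)` -/
private noncomputable def csq (v : ℂ) : ℂ := Complex.exp (Complex.log v / 2)

private lemma csq_re_pos {v : ℂ} (hv : v ∈ Complex.slitPlane) : 0 < (csq v).re := by
  rw [csq, Complex.exp_re]
  have harg : (Complex.log v / 2).im = Complex.arg v / 2 := by
    simp [Complex.div_im, Complex.log_im]
  have h1 : -Real.pi < v.arg := Complex.neg_pi_lt_arg v
  have h2 : v.arg < Real.pi :=
    lt_of_le_of_ne (Complex.arg_le_pi v) (Complex.slitPlane_arg_ne_pi hv)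
  have hcos : 0 < Real.cos ((Complex.log v / 2).im) := by
    rw [harg]
    apply Real.cos_pos_of_mem_Ioo
    constructor <;> [linarith; linarith]
  positivity

private lemma csq_ofReal {r : ℝ} (hr : 0 < r) : csq (r : ℂ) = (Real.sqrt r : ℂ) := by
  rw [csq, ← Complex.ofReal_log hr.le]
  have : ((Real.log r : ℝ) : ℂ) / 2 = ((Real.log r / 2 : ℝ) : ℂ) := by push_cast; ring
  rw [this, ← Complex.ofReal_exp]
  congr 1
  rw [Real.sqrt_eq_rpow, Real.rpow_def_of_pos hr]
  ring_nf

/-- Let `x₁, x₂ < 0`, `κ > 0`, and let `hankel : ℂ → ℂ` be holomorphic on the complex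
plane slit along the negative real axis (modeling the Hankel function `H₀⁽¹⁾`). Define
`W(z) = H₀⁽¹⁾(κ√(x₁² + (z−z₁)²)) − H₀⁽¹⁾(κ√(x₂² + (z−z₂)²))` for real `z`. If `W = 0`
on `[0,1]`, then `W = 0` on all of `ℝ`. -/
theorem stmt_14 (hankel : ℂ → ℂ)
    (hhol : AnalyticOnNhd ℂ hankel Complex.slitPlane)
    (κ x₁ x₂ z₁ z₂ : ℝ) (hκ : 0 < κ) (hx₁ : x₁ < 0) (hx₂ : x₂ < 0)
    (W : ℝ → ℂ)
    (hW : ∀ z : ℝ, W z =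
      hankel ((κ * Real.sqrt (x₁ ^ 2 + (z - z₁) ^ 2) : ℝ) : ℂ) -
        hankel ((κ * Real.sqrt (x₂ ^ 2 + (z - z₂) ^ 2) : ℝ) : ℂ))
    (hzero : ∀ z ∈ Set.Icc (0 : ℝ) 1, W z = 0) :
    ∀ z : ℝ, W z = 0 := by
  set ε : ℝ := min (-x₁) (-x₂) with hε
  have hεpos : 0 < ε := lt_min (by linarith) (by linarith)
  set S : Set ℂ := {w : ℂ | |w.im| < ε} with hS
  -- branch of the summand functions
  set G : ℂ → ℂ := fun w =>
    hankel ((κ : ℂ) * csq ((x₁ : ℂ) ^ 2 + (w - (z₁ : ℂ)) ^ 2)) -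
      hankel ((κ : ℂ) * csq ((x₂ : ℂ) ^ 2 + (w - (z₂ : ℂ)) ^ 2)) with hG
  -- key facts on S
  have hv_mem : ∀ (x c : ℝ), x < 0 → ∀ w ∈ S, -x ≥ ε →
      (x : ℂ) ^ 2 + (w - (c : ℂ)) ^ 2 ∈ Complex.slitPlane := by
    intro x c hx w hwS hge
    exact aux_mem_slitPlane x c hx w (lt_of_lt_of_le hwS hge)
  have hmul_mem : ∀ v ∈ Complex.slitPlane, (κ : ℂ) * csq v ∈ Complex.slitPlane := by
    intro v hv
    rw [Complex.mem_slitPlane_iff]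
    left
    have hp := csq_re_pos hv
    have he : ((κ : ℂ) * csq v).re = κ * (csq v).re := by
      simp [Complex.mul_re, Complex.ofReal_re, Complex.ofReal_im]
    rw [he]
    positivity
  -- analyticity of one summand
  have hsummand : ∀ (x c : ℝ), x < 0 → -x ≥ ε →
      AnalyticOnNhd ℂ (fun w => hankel ((κ : ℂ) * csq ((x : ℂ) ^ 2 + (w - (c : ℂ)) ^ 2))) S := by
    intro x c hx hge w hwS
    have hv : AnalyticAt ℂ (fun w : ℂ => (x : ℂ) ^ 2 + (w - (c : ℂ)) ^ 2) w :=
      analyticAt_const.add ((analyticAt_id.sub analyticAt_const).pow 2)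
    have hvm := hv_mem x c hx w hwS hge
    have hcsq : AnalyticAt ℂ (fun w : ℂ => (κ : ℂ) * csq ((x : ℂ) ^ 2 + (w - (c : ℂ)) ^ 2)) w := by
      apply analyticAt_const.mul
      exact ((hv.clog hvm).mul analyticAt_const).cexp
    have hc := AnalyticAt.comp (x := w)
      (f := fun w : ℂ => (κ : ℂ) * csq ((x : ℂ) ^ 2 + (w - (c : ℂ)) ^ 2)) (g := hankel)
      (hhol _ (hmul_mem _ hvm)) hcsq
    exact hc
  have hGanal : AnalyticOnNhd ℂ G S :=
    (hsummand x₁ z₁ hx₁ (min_le_left _ _)).sub (hsummand x₂ z₂ hx₂ (min_le_right _ _))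
  -- S is preconnected
  have hSconv : Convex ℝ S := by
    have : S = Complex.imLm ⁻¹' Set.Ioo (-ε) ε := by
      ext w; simp [hS, abs_lt, Complex.imLm_coe]
    rw [this]
    exact (convex_Ioo _ _).linear_preimage _
  have hSpre : IsPreconnected S := hSconv.isPreconnected
  -- G coincides with W on real points
  have hGW : ∀ z : ℝ, G (z : ℂ) = W z := by
    intro z
    have key : ∀ (x c : ℝ), x < 0 →
        (κ : ℂ) * csq ((x : ℂ) ^ 2 + ((z : ℂ) - (c : ℂ)) ^ 2) =
          ((κ * Real.sqrt (x ^ 2 + (z - c) ^ 2) : ℝ) : ℂ) := by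
      intro x c hx
      have hr : 0 < x ^ 2 + (z - c) ^ 2 := by
        nlinarith [pow_pos (neg_pos.mpr hx) 2, sq_nonneg (z - c)]
      have : ((x : ℂ) ^ 2 + ((z : ℂ) - (c : ℂ)) ^ 2) = ((x ^ 2 + (z - c) ^ 2 : ℝ) : ℂ) := by
        push_cast; ring
      rw [this, csq_ofReal hr]
      push_cast; ring
    rw [hG, hW z]
    simp only [key x₁ z₁ hx₁, key x₂ z₂ hx₂]
  -- G vanishes frequently near 0
  have h0S : (0 : ℂ) ∈ S := by simp [hS, hεpos]
  have hfreq : ∃ᶠ w in nhdsWithin (0 : ℂ) {(0 : ℂ)}ᶜ, G w = 0 := by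
    have htend : Filter.Tendsto (fun n : ℕ => ((1 / (n + 1) : ℝ) : ℂ)) Filter.atTop
        (nhdsWithin (0 : ℂ) {(0 : ℂ)}ᶜ) := by
      apply tendsto_nhdsWithin_of_tendsto_nhds_of_eventually_within
      · have h1 : Filter.Tendsto (fun n : ℕ => (1 / (n + 1) : ℝ)) Filter.atTop (nhds 0) :=
          tendsto_one_div_add_atTop_nhds_zero_nat
        exact Complex.ofReal_zero ▸ ((Complex.continuous_ofReal.tendsto 0).comp h1)
      · filter_upwards with n
        simp only [Set.mem_compl_iff, Set.mem_singleton_iff]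
        intro h
        have : (1 / (n + 1) : ℝ) = 0 := by exact_mod_cast h
        have : (0 : ℝ) < 1 / (n + 1) := by positivity
        linarith
    apply htend.frequently
    apply Filter.Frequently.of_forall
    intro n
    have hmem : (1 / (n + 1) : ℝ) ∈ Set.Icc (0 : ℝ) 1 := by
      constructor
      · positivity
      · rw [div_le_one (by positivity)]
        have : (0:ℝ) ≤ (n:ℝ) := Nat.cast_nonneg n
        linarith
    rw [hGW]
    exact hzero _ hmem
  have hGzero : Set.EqOn G 0 S :=
    hGanal.eqOn_zero_of_preconnected_of_frequently_eq_zero hSpre h0S hfreq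
  intro z
  have hzS : (z : ℂ) ∈ S := by simp [hS, hεpos]
  have := hGzero hzS
  rw [hGW] at this
  exact this
end
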